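/- arXiv:2411.12135 — 3 statements merged into one kernel-verified Lean document; each statement's English description precedes it below -/
import Mathlib

section
/- Let X and Z be jointly Gaussian real random variables, each with mean zero and positive variances, with correlation coefficient ρ = Cov(X,Z)/(σ_X σ_Z). Then E[sign(X)·sign(Z)] = (2/π)·arcsin(ρ). -/
/-!
Dividing out `σX` and `σZ`, which does not change signs, and writing `ρ = cos α`,
`√(1 - ρ²) = sin α` with `α = arccos ρ ∈ [0, π]`, the pair becomes `(W₁, cos α W₁ + sin α W₂)`.
In polar coordinates `(r cos θ, r sin θ)` the standard Gaussian on `ℝ²` is the product of the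
radial density `r e^{-r²/2}` and the uniform angle, and the integrand becomes
`sign (cos θ) * sign (cos (θ - α))`, independent of `r`. This equals `-1` on two arcs of
length `α` per period and `1` elsewhere, so the expectation is `(2π - 4α) / (2π) = 1 - 2α/π`,
which is `(2/π) arcsin ρ`.
-/

open MeasureTheory ProbabilityTheory Real Set

namespace Real

@[fun_prop]
lemma measurable_sign : Measurable sign :=
  measurable_const.ite measurableSet_Iio (measurable_const.ite measurableSet_Ioi measurable_const)

lemma abs_sign_le_one (x : ℝ) : |sign x| ≤ 1 := by
  rcases sign_apply_eq x with h | h | h <;> simp [h]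

lemma sign_mul_of_pos {c : ℝ} (hc : 0 < c) (x : ℝ) : sign (c * x) = sign x := by
  rcases lt_trichotomy x 0 with h | rfl | h
  · rw [sign_of_neg h, sign_of_neg (mul_neg_of_pos_of_neg hc h)]
  · simp
  · rw [sign_of_pos h, sign_of_pos (mul_pos hc h)]

lemma sign_cos_eq_one_of_mem_Ioo {θ : ℝ} (h : θ ∈ Ioo (-(π / 2)) (π / 2)) : sign (cos θ) = 1 :=
  sign_of_pos (cos_pos_of_mem_Ioo h)

lemma sign_cos_eq_neg_one_of_mem_Ioo {θ : ℝ} (h : θ ∈ Ioo (π / 2) (π + π / 2)) :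
    sign (cos θ) = -1 :=
  sign_of_neg (cos_neg_of_pi_div_two_lt_of_lt h.1 h.2)

end Real

lemma intervalIntegral.integral_eq_mul_of_eqOn_Ioo {f : ℝ → ℝ} {a b c : ℝ} (hab : a ≤ b)
    (h : EqOn f (fun _ => c) (Ioo a b)) : ∫ x in a..b, f x = (b - a) * c := by
  rw [intervalIntegral.integral_of_le hab, integral_Ioc_eq_integral_Ioo,
    setIntegral_congr_fun measurableSet_Ioo h, setIntegral_const, volume_real_Ioo_of_le hab,
    smul_eq_mul]

lemma integral_sign_cos_mul_sign_cos_sub {α : ℝ} (h0 : 0 ≤ α) (hα : α ≤ π) :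
    ∫ θ in (-π)..π, sign (cos θ) * sign (cos (θ - α)) = 2 * π - 4 * α := by
  set g : ℝ → ℝ := fun θ => sign (cos θ) * sign (cos (θ - α))
  have hπ := pi_pos
  have hg : ∀ a b, IntervalIntegrable g volume a b := fun a b =>
    intervalIntegrable_const.mono_fun' (by fun_prop) <| ae_of_all _ fun θ => by
      simpa only [g, norm_mul, norm_eq_abs] using
        mul_le_one₀ (abs_sign_le_one _) (abs_nonneg _) (abs_sign_le_one _)
  have hper : Function.Periodic g (2 * π) := fun θ => by
    simp only [g, cos_add_two_pi, add_sub_right_comm]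
  -- inside the period `[-π/2, 3π/2]` the factors change sign only at `α - π/2`, `π/2`, `α + π/2`
  calc ∫ θ in (-π)..π, g θ = ∫ θ in -(π / 2)..-(π / 2) + 2 * π, g θ := by
        simpa [sub_eq_add_neg, two_mul, add_assoc] using
          hper.intervalIntegral_add_eq (-π) (-(π / 2))
    _ = (∫ θ in -(π / 2)..α - π / 2, g θ) + (∫ θ in α - π / 2..π / 2, g θ)
        + (∫ θ in π / 2..α + π / 2, g θ) + ∫ θ in α + π / 2..-(π / 2) + 2 * π, g θ := by
        rw [intervalIntegral.integral_add_adjacent_intervals (hg _ _) (hg _ _),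
          intervalIntegral.integral_add_adjacent_intervals (hg _ _) (hg _ _),
          intervalIntegral.integral_add_adjacent_intervals (hg _ _) (hg _ _)]
    _ = (α - π / 2 - -(π / 2)) * (1 * -1) + (π / 2 - (α - π / 2)) * (1 * 1)
        + (α + π / 2 - π / 2) * (-1 * 1) + (-(π / 2) + 2 * π - (α + π / 2)) * (-1 * -1) := by
        congr 1; congr 1; congr 1
        all_goals
          refine intervalIntegral.integral_eq_mul_of_eqOn_Ioo (by linarith) ?_
          rintro θ ⟨hθ₁, hθ₂⟩
          show sign (cos θ) * sign (cos (θ - α)) = _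
        · rw [← cos_add_two_pi (θ - α), sign_cos_eq_one_of_mem_Ioo ⟨by linarith, by linarith⟩,
            sign_cos_eq_neg_one_of_mem_Ioo ⟨by linarith, by linarith⟩]
        · rw [sign_cos_eq_one_of_mem_Ioo ⟨by linarith, by linarith⟩,
            sign_cos_eq_one_of_mem_Ioo ⟨by linarith, by linarith⟩]
        · rw [sign_cos_eq_neg_one_of_mem_Ioo ⟨by linarith, by linarith⟩,
            sign_cos_eq_one_of_mem_Ioo ⟨by linarith, by linarith⟩]
        · rw [sign_cos_eq_neg_one_of_mem_Ioo ⟨by linarith, by linarith⟩,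
            sign_cos_eq_neg_one_of_mem_Ioo ⟨by linarith, by linarith⟩]
    _ = 2 * π - 4 * α := by ring

lemma integral_Ioi_mul_exp_neg_sq_div_two : ∫ r in Ioi (0 : ℝ), r * exp (-r ^ 2 / 2) = 1 := by
  rw [← Complex.ofReal_inj, ← integral_complex_ofReal]
  convert integral_mul_cexp_neg_mul_sq (b := 1 / 2) (by norm_num) using 2 <;> norm_num
  congr with r
  ring_nf

lemma integral_gaussianReal_prod {E : Type*} [NormedAddCommGroup E] [NormedSpace ℝ E]
    (f : ℝ × ℝ → E) :
    ∫ p, f p ∂(gaussianReal 0 1).prod (gaussianReal 0 1)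
      = ∫ p, ((2 * π)⁻¹ * exp (-(p.1 ^ 2 + p.2 ^ 2) / 2)) • f p := by
  rw [gaussianReal_of_var_ne_zero 0 one_ne_zero,
    prod_withDensity (measurable_gaussianPDF _ _) (measurable_gaussianPDF _ _),
    ← Measure.volume_eq_prod, integral_withDensity_eq_integral_toReal_smul (by fun_prop)
      (ae_of_all _ fun _ => ENNReal.mul_lt_top gaussianPDF_lt_top gaussianPDF_lt_top)]
  congr with p
  rw [ENNReal.toReal_mul, toReal_gaussianPDF, toReal_gaussianPDF]
  simp only [gaussianPDFReal, NNReal.coe_one, mul_one, sub_zero]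
  congr 1
  calc (√(2 * π))⁻¹ * exp (-p.1 ^ 2 / 2) * ((√(2 * π))⁻¹ * exp (-p.2 ^ 2 / 2))
      = (√(2 * π) * √(2 * π))⁻¹ * exp (-p.1 ^ 2 / 2 + -p.2 ^ 2 / 2) := by
        rw [exp_add, mul_inv]; ring
    _ = _ := by rw [mul_self_sqrt (by positivity)]; ring_nf

lemma integral_sign_mul_sign_cos_mul_add_sin_mul {α : ℝ} (h0 : 0 ≤ α) (hα : α ≤ π) :
    ∫ p, sign p.1 * sign (cos α * p.1 + sin α * p.2) ∂(gaussianReal 0 1).prod (gaussianReal 0 1)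
      = 1 - 2 * α / π := by
  rw [integral_gaussianReal_prod, ← integral_comp_polarCoord_symm, polarCoord_target,
    setIntegral_congr_fun (measurableSet_Ioi.prod measurableSet_Ioo)
      (g := fun p => p.1 * exp (-p.1 ^ 2 / 2) *
        ((2 * π)⁻¹ * (sign (cos p.2) * sign (cos (p.2 - α)))))
      ?polar,
    Measure.volume_eq_prod, setIntegral_prod_mul (fun r => r * exp (-r ^ 2 / 2))
      (fun θ => (2 * π)⁻¹ * (sign (cos θ) * sign (cos (θ - α)))),
    integral_Ioi_mul_exp_neg_sq_div_two, integral_const_mul, ← integral_Ioc_eq_integral_Ioo,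
    ← intervalIntegral.integral_of_le (by linarith [pi_pos]),
    integral_sign_cos_mul_sign_cos_sub h0 hα]
  case polar =>
    rintro ⟨r, θ⟩ ⟨hr, -⟩
    have hnorm : (r * cos θ) ^ 2 + (r * sin θ) ^ 2 = r ^ 2 := by
      linear_combination r ^ 2 * cos_sq_add_sin_sq θ
    have hrot : cos α * (r * cos θ) + sin α * (r * sin θ) = r * cos (θ - α) := by
      rw [cos_sub]; ring
    simp only [polarCoord_symm_apply, smul_eq_mul, hnorm, hrot, sign_mul_of_pos (mem_Ioi.1 hr)]
    ring
  field_simp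
  ring

lemma ProbabilityTheory.IndepFun.integral_comp_prodMk {Ω α β E : Type*} [MeasurableSpace Ω]
    [MeasurableSpace α] [MeasurableSpace β] [NormedAddCommGroup E] [NormedSpace ℝ E] {μ : Measure Ω}
    {ν₁ : Measure α} {ν₂ : Measure β} [SigmaFinite ν₁] [SigmaFinite ν₂] [NeZero ν₁] [NeZero ν₂]
    {W₁ : Ω → α} {W₂ : Ω → β} (hind : IndepFun W₁ W₂ μ) (hW₁ : μ.map W₁ = ν₁)
    (hW₂ : μ.map W₂ = ν₂) {F : α × β → E} (hF : AEStronglyMeasurable F (ν₁.prod ν₂)) :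
    ∫ ω, F (W₁ ω, W₂ ω) ∂μ = ∫ p, F p ∂(ν₁.prod ν₂) := by
  subst hW₁ hW₂
  have h₁ : AEMeasurable W₁ μ := aemeasurable_of_map_neZero inferInstance
  have h₂ : AEMeasurable W₂ μ := aemeasurable_of_map_neZero inferInstance
  rw [← (indepFun_iff_map_prod_eq_prod_map_map' h₁ h₂ inferInstance inferInstance).1 hind] at hF ⊢
  exact (integral_map (h₁.prodMk h₂) hF).symm

theorem stmt1_general {Ω : Type*} [MeasurableSpace Ω] (μ : Measure Ω)
    (W₁ W₂ : Ω → ℝ) (hW₁ : Measure.map W₁ μ = gaussianReal 0 1)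
    (hW₂ : Measure.map W₂ μ = gaussianReal 0 1)
    (hind : IndepFun W₁ W₂ μ)
    (σX σZ ρ : ℝ) (hσX : 0 < σX) (hσZ : 0 < σZ) (hρ : ρ ∈ Set.Icc (-1 : ℝ) 1)
    (X Z : Ω → ℝ)
    (hX : ∀ ω, X ω = σX * W₁ ω)
    (hZ : ∀ ω, Z ω = σZ * (ρ * W₁ ω + Real.sqrt (1 - ρ ^ 2) * W₂ ω)) :
    ∫ ω, Real.sign (X ω) * Real.sign (Z ω) ∂μ = (2 / Real.pi) * Real.arcsin ρ := by
  set α := arccos ρ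
  have hsigns : ∀ ω, sign (X ω) * sign (Z ω)
      = sign (W₁ ω) * sign (cos α * W₁ ω + sin α * W₂ ω) := fun ω => by
    rw [hX, hZ, sign_mul_of_pos hσX, sign_mul_of_pos hσZ, cos_arccos hρ.1 hρ.2, sin_arccos]
  simp only [hsigns]
  rw [hind.integral_comp_prodMk hW₁ hW₂
      (F := fun p => sign p.1 * sign (cos α * p.1 + sin α * p.2)) (by fun_prop),
    integral_sign_mul_sign_cos_mul_add_sin_mul (arccos_nonneg ρ) (arccos_le_pi ρ),
    arcsin_eq_pi_div_two_sub_arccos]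
  field_simp

/-- Grothendieck's identity: if `(X, Z)` is a centered bivariate Gaussian vector with
positive variances `σX²`, `σZ²` and correlation `ρ` (encoded via the standard
representation `X = σX W₁`, `Z = σZ (ρ W₁ + √(1-ρ²) W₂)` for independent standard
Gaussians `W₁, W₂`), then `E[sign X · sign Z] = (2/π) arcsin ρ`. -/
theorem stmt1 {Ω : Type*} [MeasurableSpace Ω] (μ : Measure Ω) [IsProbabilityMeasure μ]
    (W₁ W₂ : Ω → ℝ) (hW₁ : Measure.map W₁ μ = gaussianReal 0 1)
    (hW₂ : Measure.map W₂ μ = gaussianReal 0 1)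
    (hind : IndepFun W₁ W₂ μ)
    (σX σZ ρ : ℝ) (hσX : 0 < σX) (hσZ : 0 < σZ) (hρ : ρ ∈ Set.Icc (-1 : ℝ) 1)
    (X Z : Ω → ℝ)
    (hX : ∀ ω, X ω = σX * W₁ ω)
    (hZ : ∀ ω, Z ω = σZ * (ρ * W₁ ω + Real.sqrt (1 - ρ ^ 2) * W₂ ω)) :
    ∫ ω, Real.sign (X ω) * Real.sign (Z ω) ∂μ = (2 / Real.pi) * Real.arcsin ρ :=
  stmt1_general μ W₁ W₂ hW₁ hW₂ hind σX σZ ρ hσX hσZ hρ X Z hX hZ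
end

section
/- Fix η > 0, α > 0, σ ≥ 0. Consider the equation 0 = -4√α·η·R/(π·√(2R+σ²)) + η²α/2 in R ≥ 0. Its unique nonnegative solution is R_∞ = (η²π²α + ηπ·√(η²π²α² + 64·α·σ²))/64. In particular if σ = 0 then R_∞ = η²π²α/32. -/
open Real

private lemma sq_cancel_aux {a b : ℝ} (ha : 0 ≤ a) (hb : 0 ≤ b) (h : a ^ 2 = b ^ 2) :
    a = b := by
  calc a = Real.sqrt (a ^ 2) := (Real.sqrt_sq ha).symm
    _ = Real.sqrt (b ^ 2) := by rw [h]
    _ = b := Real.sqrt_sq hb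

set_option maxHeartbeats 1600000 in
/-- The stationary risk of signSGD on isotropic data `K = α I` with Gaussian noise of
variance `σ²`: the unique nonnegative solution of
`0 = -4√α η R/(π √(2R+σ²)) + η² α/2` is
`R_∞ = (η²π²α + ηπ √(η²π²α² + 64ασ²))/64`; if `σ = 0` then `R_∞ = η²π²α/32`. -/
theorem stmt12 (η α σ : ℝ) (hη : 0 < η) (hα : 0 < α) (hσ : 0 ≤ σ) :
    (∀ R : ℝ, 0 ≤ R →
        ((0 : ℝ) = -(4 * Real.sqrt α * η * R) / (π * Real.sqrt (2 * R + σ ^ 2))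
            + η ^ 2 * α / 2 ↔
          R = (η ^ 2 * π ^ 2 * α
              + η * π * Real.sqrt (η ^ 2 * π ^ 2 * α ^ 2 + 64 * α * σ ^ 2)) / 64)) ∧
      (σ = 0 →
        (η ^ 2 * π ^ 2 * α
            + η * π * Real.sqrt (η ^ 2 * π ^ 2 * α ^ 2 + 64 * α * σ ^ 2)) / 64 =
          η ^ 2 * π ^ 2 * α / 32) := by
  have hπ : 0 < π := Real.pi_pos
  have hsa : 0 < Real.sqrt α := Real.sqrt_pos.mpr hα
  have hsa2 : Real.sqrt α ^ 2 = α := Real.sq_sqrt hα.le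
  have hargY : 0 ≤ η ^ 2 * π ^ 2 * α ^ 2 + 64 * α * σ ^ 2 := by positivity
  set Y := Real.sqrt (η ^ 2 * π ^ 2 * α ^ 2 + 64 * α * σ ^ 2) with hYdef
  have hY0 : 0 ≤ Y := Real.sqrt_nonneg _
  have hY2 : Y ^ 2 = η ^ 2 * π ^ 2 * α ^ 2 + 64 * α * σ ^ 2 := Real.sq_sqrt hargY
  have hX : 0 < η ^ 2 * π ^ 2 * α := by positivity
  constructor
  · intro R hR
    have harg : 0 ≤ 2 * R + σ ^ 2 := by positivity
    set s := Real.sqrt (2 * R + σ ^ 2) with hsdef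
    have hs0 : 0 ≤ s := Real.sqrt_nonneg _
    have hs2 : s ^ 2 = 2 * R + σ ^ 2 := Real.sq_sqrt harg
    constructor
    · intro heq
      rcases eq_or_lt_of_le hs0 with h0 | hspos
      · exfalso
        rw [← h0, mul_zero, div_zero] at heq
        nlinarith [heq, hX]
      · -- multiply through
        have hne : π * s ≠ 0 := by positivity
        have h1 : 8 * Real.sqrt α * R = η * α * π * s := by
          field_simp at heq
          nlinarith [heq, hη, mul_pos hπ hspos]
        have h1sq : (8 * Real.sqrt α * R) ^ 2 = (η * α * π * s) ^ 2 := by rw [h1]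
        have key : α * (64 * R ^ 2) = α * (η ^ 2 * π ^ 2 * α * (2 * R + σ ^ 2)) := by
          linear_combination h1sq - 64 * R ^ 2 * hsa2 + η ^ 2 * α ^ 2 * π ^ 2 * hs2
        have h2 : 64 * R ^ 2 = η ^ 2 * π ^ 2 * α * (2 * R + σ ^ 2) :=
          mul_left_cancel₀ hα.ne' key
        have hRpos : 0 < R := by
          nlinarith [h1, mul_pos (mul_pos (mul_pos hη hα) hπ) hspos, hsa]
        have h4 : 0 < 64 * R - η ^ 2 * π ^ 2 * α := by
          nlinarith [h2, hRpos, mul_pos hX hRpos,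
            mul_nonneg hX.le (sq_nonneg σ)]
        have h3 : (64 * R - η ^ 2 * π ^ 2 * α) ^ 2 = (η * π * Y) ^ 2 := by
          linear_combination 64 * h2 - η ^ 2 * π ^ 2 * hY2
        have h5 : 64 * R - η ^ 2 * π ^ 2 * α = η * π * Y :=
          sq_cancel_aux h4.le (by positivity) h3
        linarith
    · intro hReq
      have hRpos : 0 < R := by
        rw [hReq]; positivity
      have h2 : 64 * R ^ 2 = η ^ 2 * π ^ 2 * α * (2 * R + σ ^ 2) := by
        rw [hReq]
        linear_combination (η ^ 2 * π ^ 2 / 64) * hY2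
      have hspos : 0 < s := by
        rw [hsdef]
        refine Real.sqrt_pos.mpr ?_
        nlinarith [sq_nonneg σ, hRpos]
      have hkey : η * π * Real.sqrt α * s = 8 * R := by
        have hsq : (η * π * Real.sqrt α * s) ^ 2 = (8 * R) ^ 2 := by
          have : (η * π * Real.sqrt α * s) ^ 2 = η ^ 2 * π ^ 2 * α * (2 * R + σ ^ 2) := by
            rw [mul_pow, mul_pow, mul_pow, hsa2, hs2]
          rw [this]; linear_combination -h2
        exact sq_cancel_aux (by positivity) (by positivity) hsq
      have hne : π * s ≠ 0 := by positivity
      field_simp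
      linear_combination η ^ 2 * π * s * hsa2 - η * Real.sqrt α * hkey
  · intro hσ0
    subst hσ0
    have hY : Y = η * π * α := by
      rw [hYdef, show η ^ 2 * π ^ 2 * α ^ 2 + 64 * α * 0 ^ 2 = (η * π * α) ^ 2 by ring,
        Real.sqrt_sq (by positivity)]
    rw [hY]; ring
end

section
/- Let K be a d×d real symmetric matrix with ||K||_op ≤ B, let Γ = ∂B(0, 2||K||_op) ⊂ ℂ, and suppose sup_{z∈Γ} ||(K - zI)^{-1}||_op ≤ M_R. If Γ₀ ⊂ Γ is a (1/√d)-net of Γ, then for all z ∈ Γ, all 1 ≤ i ≤ d, and all a ∈ ℝ^d: |R(z;K)_i^T a| ≤ (1 + M_R)·max_{z₀ ∈ Γ₀} max_{1≤j≤d} |R(z₀;K)_j^T a|, where R(z;K) = (K - zI)^{-1} and R(z;K)_i denotes its i-th row. -/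
open Matrix

/-- Euclidean norm of a complex vector. -/
noncomputable def cNorm {d : ℕ} (v : Fin d → ℂ) : ℝ :=
  Real.sqrt (∑ i, ‖v i‖ ^ 2)

/-- Euclidean norm of a real vector. -/
noncomputable def rNorm {d : ℕ} (v : Fin d → ℝ) : ℝ :=
  Real.sqrt (∑ i, v i ^ 2)

/-!
Write `R = R(z;K)` and `R₀ = R(z₀;K)` for a net point `z₀` with `|z - z₀| ≤ 1/√d`. The resolvent
identity `R = R₀ + (z - z₀) R R₀` gives `(R a)ᵢ = (R₀ a)ᵢ + (z - z₀) (R (R₀ a))ᵢ`. Every entry of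
`R₀ a` is at most `B'`, so `‖R₀ a‖₂ ≤ √d B'`, hence `|(R (R₀ a))ᵢ| ≤ ‖R (R₀ a)‖₂ ≤ M_R √d B'`, and
the factor `|z - z₀| ≤ 1/√d` cancels the `√d`.
-/

section cNorm

variable {d : ℕ}

lemma norm_apply_le_cNorm (v : Fin d → ℂ) (i : Fin d) : ‖v i‖ ≤ cNorm v := by
  rw [← Real.sqrt_sq (norm_nonneg (v i)), cNorm]
  exact Real.sqrt_le_sqrt <|
    Finset.single_le_sum (f := fun j => ‖v j‖ ^ 2) (fun j _ => sq_nonneg _) (Finset.mem_univ i)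

lemma cNorm_le_sqrt_mul_of_forall_norm_le {v : Fin d → ℂ} {b : ℝ} (hv : ∀ j, ‖v j‖ ≤ b) :
    cNorm v ≤ Real.sqrt d * b := by
  rcases Nat.eq_zero_or_pos d with rfl | hd
  · simp [cNorm]
  have hb : 0 ≤ b := (norm_nonneg _).trans (hv ⟨0, hd⟩)
  calc cNorm v ≤ Real.sqrt (∑ _j : Fin d, b ^ 2) :=
        Real.sqrt_le_sqrt <| Finset.sum_le_sum fun j _ => pow_le_pow_left₀ (norm_nonneg _) (hv j) 2
    _ = Real.sqrt d * b := by
        rw [Finset.sum_const, Finset.card_univ, Fintype.card_fin, nsmul_eq_mul,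
          Real.sqrt_mul (Nat.cast_nonneg d), Real.sqrt_sq hb]

lemma cNorm_const_one : cNorm (fun _ : Fin d => (1 : ℂ)) = Real.sqrt d := by
  simp [cNorm]

lemma nonneg_of_cNorm_mulVec_le {A : Matrix (Fin d) (Fin d) ℂ} {M : ℝ}
    (hA : ∀ v, cNorm (A *ᵥ v) ≤ M * cNorm v) (i : Fin d) : 0 ≤ M := by
  have hsqrt : 0 < Real.sqrt d := Real.sqrt_pos.mpr (Nat.cast_pos.mpr i.pos)
  have h := (Real.sqrt_nonneg _).trans (hA fun _ => 1)
  rw [cNorm_const_one] at h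
  exact nonneg_of_mul_nonneg_left h hsqrt

end cNorm

lemma Matrix.inv_sub_smul_one_eq_add {n α : Type*} [Fintype n] [DecidableEq n] [CommRing α]
    {A : Matrix n n α} {z z₀ : α} (hz : IsUnit (A - z • 1)) (hz₀ : IsUnit (A - z₀ • 1)) :
    (A - z • 1)⁻¹ = (A - z₀ • 1)⁻¹ + (z - z₀) • ((A - z • 1)⁻¹ * (A - z₀ • 1)⁻¹) := by
  have h := Matrix.inv_sub_inv (A := A - z • 1) (B := A - z₀ • 1) (iff_of_true hz hz₀)
  rw [show A - z₀ • 1 - (A - z • 1) = (z - z₀) • (1 : Matrix n n α) by rw [sub_smul]; abel,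
    Matrix.mul_smul, Matrix.mul_one, Matrix.smul_mul] at h
  exact eq_add_of_sub_eq' h

lemma norm_mulVec_apply_le_of_eq_add_smul_mul {d : ℕ} {R R₀ : Matrix (Fin d) (Fin d) ℂ}
    {c : ℂ} {M b : ℝ} {v : Fin d → ℂ} (hR : R = R₀ + c • (R * R₀))
    (hM : ∀ u, cNorm (R *ᵥ u) ≤ M * cNorm u) (hc : ‖c‖ ≤ 1 / Real.sqrt d)
    (hv : ∀ j, ‖(R₀ *ᵥ v) j‖ ≤ b) (i : Fin d) :
    ‖(R *ᵥ v) i‖ ≤ (1 + M) * b := by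
  set w := R₀ *ᵥ v
  have hsqrt : 0 < Real.sqrt d := Real.sqrt_pos.mpr (Nat.cast_pos.mpr i.pos)
  have hM0 : 0 ≤ M := nonneg_of_cNorm_mulVec_le hM i
  have hRw : ‖(R *ᵥ w) i‖ ≤ M * (Real.sqrt d * b) :=
    (norm_apply_le_cNorm _ i).trans <| (hM w).trans <|
      mul_le_mul_of_nonneg_left (cNorm_le_sqrt_mul_of_forall_norm_le hv) hM0
  have hdecomp : (R *ᵥ v) i = w i + c * (R *ᵥ w) i := by
    conv_lhs => rw [hR]
    simp only [Matrix.add_mulVec, Matrix.smul_mulVec, ← Matrix.mulVec_mulVec, Pi.add_apply,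
      Pi.smul_apply, smul_eq_mul, w]
  calc ‖(R *ᵥ v) i‖ ≤ ‖w i‖ + ‖c‖ * ‖(R *ᵥ w) i‖ := by
        rw [hdecomp, ← norm_mul]; exact norm_add_le _ _
    _ ≤ b + 1 / Real.sqrt d * (M * (Real.sqrt d * b)) :=
        add_le_add (hv i) (mul_le_mul hc hRw (norm_nonneg _) (by positivity))
    _ = (1 + M) * b := by field_simp

theorem stmt16_general {d : ℕ} (K : Matrix (Fin d) (Fin d) ℝ)
    (B M_R : ℝ)
    (Res : ℂ → Matrix (Fin d) (Fin d) ℂ)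
    (hRes : ∀ z, Res z = (K.map (Complex.ofReal) - z • (1 : Matrix (Fin d) (Fin d) ℂ))⁻¹)
    (hinv : ∀ z ∈ Metric.sphere (0 : ℂ) (2 * B),
      IsUnit (K.map (Complex.ofReal) - z • (1 : Matrix (Fin d) (Fin d) ℂ)))
    (hMR : ∀ z ∈ Metric.sphere (0 : ℂ) (2 * B), ∀ v : Fin d → ℂ,
      cNorm ((Res z).mulVec v) ≤ M_R * cNorm v)
    (Γ₀ : Finset ℂ) (hΓ₀ : ↑Γ₀ ⊆ Metric.sphere (0 : ℂ) (2 * B))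
    (hnet : ∀ z ∈ Metric.sphere (0 : ℂ) (2 * B),
      ∃ z₀ ∈ Γ₀, ‖z - z₀‖ ≤ 1 / Real.sqrt d)
    (a : Fin d → ℝ) (B' : ℝ)
    (hB' : ∀ z₀ ∈ Γ₀, ∀ j : Fin d, ‖∑ l, Res z₀ j l * (a l : ℂ)‖ ≤ B') :
    ∀ z ∈ Metric.sphere (0 : ℂ) (2 * B), ∀ i : Fin d,
      ‖∑ l, Res z i l * (a l : ℂ)‖ ≤ (1 + M_R) * B' := by
  intro z hz i
  obtain ⟨z₀, hz₀, hzz₀⟩ := hnet z hz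
  have hres : Res z = Res z₀ + (z - z₀) • (Res z * Res z₀) := by
    simp only [hRes]
    exact Matrix.inv_sub_smul_one_eq_add (hinv z hz) (hinv z₀ (hΓ₀ hz₀))
  exact norm_mulVec_apply_le_of_eq_add_smul_mul (v := fun l => (a l : ℂ)) hres (hMR z hz) hzz₀
    (hB' z₀ hz₀) i

/-- Resolvent net bound: if `‖K‖_op ≤ B`, `Γ` is the circle of radius `2B`,
`‖R(z;K)‖_op ≤ M_R` on `Γ`, and `Γ₀ ⊆ Γ` is a `1/√d`-net of `Γ`, then for every `z ∈ Γ`,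
row `i` and vector `a`,
`|R(z;K)ᵢᵀ a| ≤ (1 + M_R) · max_{z₀ ∈ Γ₀} max_j |R(z₀;K)ⱼᵀ a|`. -/
theorem stmt16 {d : ℕ} (hd : 0 < d) (K : Matrix (Fin d) (Fin d) ℝ) (hKsym : K.IsSymm)
    (B M_R : ℝ) (hB : 0 < B)
    (hKB : ∀ v : Fin d → ℝ, rNorm (K.mulVec v) ≤ B * rNorm v)
    (Res : ℂ → Matrix (Fin d) (Fin d) ℂ)
    (hRes : ∀ z, Res z = (K.map (Complex.ofReal) - z • (1 : Matrix (Fin d) (Fin d) ℂ))⁻¹)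
    (hinv : ∀ z ∈ Metric.sphere (0 : ℂ) (2 * B),
      IsUnit (K.map (Complex.ofReal) - z • (1 : Matrix (Fin d) (Fin d) ℂ)))
    (hMR : ∀ z ∈ Metric.sphere (0 : ℂ) (2 * B), ∀ v : Fin d → ℂ,
      cNorm ((Res z).mulVec v) ≤ M_R * cNorm v)
    (Γ₀ : Finset ℂ) (hΓ₀ : ↑Γ₀ ⊆ Metric.sphere (0 : ℂ) (2 * B))
    (hnet : ∀ z ∈ Metric.sphere (0 : ℂ) (2 * B),
      ∃ z₀ ∈ Γ₀, ‖z - z₀‖ ≤ 1 / Real.sqrt d)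
    (a : Fin d → ℝ) (B' : ℝ)
    (hB' : ∀ z₀ ∈ Γ₀, ∀ j : Fin d, ‖∑ l, Res z₀ j l * (a l : ℂ)‖ ≤ B') :
    ∀ z ∈ Metric.sphere (0 : ℂ) (2 * B), ∀ i : Fin d,
      ‖∑ l, Res z i l * (a l : ℂ)‖ ≤ (1 + M_R) * B' :=
  stmt16_general K B M_R Res hRes hinv hMR Γ₀ hΓ₀ hnet a B' hB'
end
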